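/- The electromagnetic local components F^{(α)}_{(i)j} = −(1/4)·U^{(α)}_{(i)j} of the autonomous metrical multi-time Lagrange space of electrodynamics satisfy the first Maxwell-type equation: for all indices α, β ∈ Fin p, i, j ∈ Fin n and all (t,x), F^{(α)}_{(i)j/β} = (1/2)·[Σ_{μ,m} h^{αμ}(t) g_{im}(x) R^{(m)}_{(μ)βj}(t,x) − Σ_{μ,m} h^{αμ}(t) g_{jm}(x) R^{(m)}_{(μ)βi}(t,x)], where the temporal horizontal covariant derivative is F^{(α)}_{(i)j/β} = ∂F^{(α)}_{(i)j}/∂t^β + Σ_γ H^α_{γβ}(t) F^{(γ)}_{(i)j}, and R^{(m)}_{(μ)βj} = −(1/4)Σ_{η,k} h_{μη}(t) g^{mk}(x)·[Σ_γ H^η_{βγ}(t) U^{(γ)}_{(k)j}(t,x) + ∂U^{(η)}_{(k)j}/∂t^β (t,x)] is the mixed torsion d-tensor of the Cartan canonical connection. -/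
import Mathlib


/- STATEMENT 9: The electromagnetic components `F^{(α)}_{(i)j} = −(1/4)U^{(α)}_{(i)j}`
satisfy the first Maxwell-type equation
`F^{(α)}_{(i)j/β} = (1/2)·𝒜_{{i,j}} Σ_{μ,m} h^{αμ} g_{im} R^{(m)}_{(μ)βj}`. -/

open scoped BigOperators

noncomputable section

def pd {m : ℕ} (f : (Fin m → ℝ) → ℝ) (a : Fin m) (t : Fin m → ℝ) : ℝ :=
  fderiv ℝ f t (Pi.single a 1)

/-- Christoffel symbols `H^c_{ab}` of the temporal metric `h`. -/
def chT {p : ℕ} (h : (Fin p → ℝ) → Matrix (Fin p) (Fin p) ℝ)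
    (c a b : Fin p) (t : Fin p → ℝ) : ℝ :=
  (1/2) * ∑ e, (h t)⁻¹ c e *
    (pd (fun s => h s e a) b t + pd (fun s => h s e b) a t - pd (fun s => h s a b) e t)

/-- `U^{(a)}_{(i)j} = ∂U^{(a)}_{(i)}/∂x^j − ∂U^{(a)}_{(j)}/∂x^i`. -/
def Ucurl {p n : ℕ} (U : Fin p → Fin n → (Fin p → ℝ) → (Fin n → ℝ) → ℝ)
    (a : Fin p) (i j : Fin n) (t : Fin p → ℝ) (x : Fin n → ℝ) : ℝ :=
  pd (fun z => U a i t z) j x - pd (fun z => U a j t z) i x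

/-- Electromagnetic components `F^{(α)}_{(i)j} = −(1/4)U^{(α)}_{(i)j}`. -/
def Fem {p n : ℕ} (U : Fin p → Fin n → (Fin p → ℝ) → (Fin n → ℝ) → ℝ)
    (a : Fin p) (i j : Fin n) (t : Fin p → ℝ) (x : Fin n → ℝ) : ℝ :=
  -(1/4) * Ucurl U a i j t x

/-- Temporal horizontal covariant derivative
`F^{(α)}_{(i)j/β} = ∂F^{(α)}_{(i)j}/∂t^β + Σ_γ H^α_{γβ} F^{(γ)}_{(i)j}`. -/
def FemCovT {p n : ℕ} (h : (Fin p → ℝ) → Matrix (Fin p) (Fin p) ℝ)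
    (U : Fin p → Fin n → (Fin p → ℝ) → (Fin n → ℝ) → ℝ)
    (a : Fin p) (i j : Fin n) (b : Fin p) (t : Fin p → ℝ) (x : Fin n → ℝ) : ℝ :=
  pd (fun s => Fem U a i j s x) b t + ∑ c, chT h a c b t * Fem U c i j t x

/-- Mixed torsion d-tensor
`R^{(m)}_{(μ)βj} = −(1/4)Σ_{η,k} h_{μη} g^{mk}·[Σ_γ H^η_{βγ} U^{(γ)}_{(k)j} + ∂U^{(η)}_{(k)j}/∂t^β]`. -/
def torsionTS {p n : ℕ} (h : (Fin p → ℝ) → Matrix (Fin p) (Fin p) ℝ)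
    (g : (Fin n → ℝ) → Matrix (Fin n) (Fin n) ℝ)
    (U : Fin p → Fin n → (Fin p → ℝ) → (Fin n → ℝ) → ℝ)
    (m : Fin n) (mu b : Fin p) (j : Fin n) (t : Fin p → ℝ) (x : Fin n → ℝ) : ℝ :=
  -(1/4) * ∑ e, ∑ k, h t mu e * (g x)⁻¹ m k *
    ((∑ c, chT h e b c t * Ucurl U c k j t x) + pd (fun s => Ucurl U e k j s x) b t)


lemma pd_const_mul {m : ℕ} (c : ℝ) (f : (Fin m → ℝ) → ℝ) (a : Fin m) (t : Fin m → ℝ) :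
    pd (fun s => c * f s) a t = c * pd f a t := by
  by_cases hf : DifferentiableAt ℝ f t
  · unfold pd; rw [fderiv_const_mul hf]; simp
  · rcases eq_or_ne c 0 with rfl | hc
    · simp [pd]
    · unfold pd
      rw [fderiv_zero_of_not_differentiableAt hf, fderiv_zero_of_not_differentiableAt]
      · simp
      · intro hd
        apply hf
        have heq : (fun s => c⁻¹ * (c * f s)) = f := by funext s; field_simp
        simpa [heq] using hd.const_mul c⁻¹

lemma pd_congr {m : ℕ} {f g : (Fin m → ℝ) → ℝ} (hfg : ∀ s, f s = g s) (a : Fin m)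
    (t : Fin m → ℝ) : pd f a t = pd g a t := by
  unfold pd; rw [funext hfg]

lemma contract_aux {p n : ℕ} (c H : Matrix (Fin p) (Fin p) ℝ) (d G : Matrix (Fin n) (Fin n) ℝ)
    (A : Fin p → Fin n → ℝ) (a : Fin p) (i : Fin n)
    (hc : c * H = 1) (hd : d * G = 1) :
    ∑ mu, ∑ m, c a mu * d i m * ∑ e, ∑ k, H mu e * G m k * A e k = A a i := by
  calc ∑ mu, ∑ m, c a mu * d i m * ∑ e, ∑ k, H mu e * G m k * A e k
      = ∑ mu, ∑ e, ∑ m, ∑ k, c a mu * H mu e * (d i m * G m k) * A e k := by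
        apply Finset.sum_congr rfl; intro mu _
        rw [Finset.sum_comm]
        apply Finset.sum_congr rfl; intro e _
        simp only [Finset.mul_sum]
        apply Finset.sum_congr rfl; intro m _
        apply Finset.sum_congr rfl; intro k _
        ring
    _ = ∑ mu, ∑ e, c a mu * H mu e * ∑ k, (∑ m, d i m * G m k) * A e k := by
        apply Finset.sum_congr rfl; intro mu _
        apply Finset.sum_congr rfl; intro e _
        rw [Finset.sum_comm]
        simp only [Finset.mul_sum, Finset.sum_mul]
        apply Finset.sum_congr rfl; intro k _
        apply Finset.sum_congr rfl; intro m _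
        ring
    _ = ∑ mu, ∑ e, c a mu * H mu e * A e i := by
        apply Finset.sum_congr rfl; intro mu _
        apply Finset.sum_congr rfl; intro e _
        congr 1
        have hk : ∀ k, ∑ m, d i m * G m k = (1 : Matrix (Fin n) (Fin n) ℝ) i k := by
          intro k; rw [← hd]; simp [Matrix.mul_apply]
        simp [hk, Matrix.one_apply]
    _ = A a i := by
        rw [Finset.sum_comm]
        have he : ∀ e, ∑ mu, c a mu * H mu e = (1 : Matrix (Fin p) (Fin p) ℝ) a e := by
          intro e; rw [← hc]; simp [Matrix.mul_apply]
        simp only [← Finset.sum_mul]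
        simp [he, Matrix.one_apply]

lemma Ucurl_antisymm {p n : ℕ} (U : Fin p → Fin n → (Fin p → ℝ) → (Fin n → ℝ) → ℝ)
    (a : Fin p) (i j : Fin n) (t : Fin p → ℝ) (x : Fin n → ℝ) :
    Ucurl U a j i t x = -1 * Ucurl U a i j t x := by
  unfold Ucurl; ring

lemma chT_symm {p : ℕ} (h : (Fin p → ℝ) → Matrix (Fin p) (Fin p) ℝ)
    (hsymm : ∀ t, (h t).IsSymm) (c a b : Fin p) (t : Fin p → ℝ) :
    chT h c a b t = chT h c b a t := by
  unfold chT
  congr 1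
  apply Finset.sum_congr rfl; intro e _
  have hab : pd (fun s => h s a b) e t = pd (fun s => h s b a) e t :=
    pd_congr (fun s => (hsymm s).apply b a) e t
  rw [hab]; ring

theorem first_maxwell_equation {p n : ℕ}
    (h : (Fin p → ℝ) → Matrix (Fin p) (Fin p) ℝ)
    (g : (Fin n → ℝ) → Matrix (Fin n) (Fin n) ℝ)
    (U : Fin p → Fin n → (Fin p → ℝ) → (Fin n → ℝ) → ℝ)
    (hsmooth : ∀ a b, ContDiff ℝ (⊤ : ℕ∞) (fun t => h t a b))
    (hsymm : ∀ t, (h t).IsSymm)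
    (hinv : ∀ t, IsUnit (h t).det)
    (gsmooth : ∀ i j, ContDiff ℝ (⊤ : ℕ∞) (fun x => g x i j))
    (gsymm : ∀ x, (g x).IsSymm)
    (ginv : ∀ x, IsUnit (g x).det)
    (Usmooth : ∀ a i, ContDiff ℝ (⊤ : ℕ∞) (fun q : (Fin p → ℝ) × (Fin n → ℝ) => U a i q.1 q.2))
    (a b : Fin p) (i j : Fin n) (t : Fin p → ℝ) (x : Fin n → ℝ) :
    FemCovT h U a i j b t x =
      (1/2) * ((∑ mu, ∑ m, (h t)⁻¹ a mu * g x i m * torsionTS h g U m mu b j t x)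
        - (∑ mu, ∑ m, (h t)⁻¹ a mu * g x j m * torsionTS h g U m mu b i t x)) := by
  have hc : (h t)⁻¹ * h t = 1 := Matrix.nonsing_inv_mul (h t) (hinv t)
  have hd : g x * (g x)⁻¹ = 1 := Matrix.mul_nonsing_inv (g x) (ginv x)
  have pull : ∀ (i' : Fin n) (S : Fin p → Fin n → ℝ),
      (∑ mu, ∑ m, (h t)⁻¹ a mu * g x i' m * (-(1/4) * S mu m))
        = -(1/4) * ∑ mu, ∑ m, (h t)⁻¹ a mu * g x i' m * S mu m := by
    intro i' S
    rw [Finset.mul_sum]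
    apply Finset.sum_congr rfl; intro mu _
    rw [Finset.mul_sum]
    apply Finset.sum_congr rfl; intro m _
    ring
  have T : ∀ (i' j' : Fin n),
      (∑ mu, ∑ m, (h t)⁻¹ a mu * g x i' m * torsionTS h g U m mu b j' t x)
        = -(1/4) * ((∑ c, chT h a b c t * Ucurl U c i' j' t x)
            + pd (fun s => Ucurl U a i' j' s x) b t) := by
    intro i' j'
    unfold torsionTS
    rw [pull i' _]
    congr 1
    exact contract_aux ((h t)⁻¹) (h t) (g x) ((g x)⁻¹)
      (fun e k => (∑ c, chT h e b c t * Ucurl U c k j' t x)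
        + pd (fun s => Ucurl U e k j' s x) b t) a i' hc hd
  rw [T i j, T j i]
  have hS : (∑ c, chT h a b c t * Ucurl U c j i t x)
      = -(∑ c, chT h a b c t * Ucurl U c i j t x) := by
    rw [← Finset.sum_neg_distrib]
    apply Finset.sum_congr rfl; intro c _
    rw [Ucurl_antisymm]; ring
  have hP : pd (fun s => Ucurl U a j i s x) b t
      = -(1) * pd (fun s => Ucurl U a i j s x) b t := by
    rw [← pd_const_mul (-1 : ℝ) (fun s => Ucurl U a i j s x) b t]
    exact pd_congr (fun s => Ucurl_antisymm U a i j s x) b t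
  rw [hS, hP]
  unfold FemCovT Fem
  rw [pd_const_mul (-(1/4) : ℝ) (fun s => Ucurl U a i j s x) b t]
  have hsum : (∑ c, chT h a c b t * (-(1/4) * Ucurl U c i j t x))
      = -(1/4) * ∑ c, chT h a b c t * Ucurl U c i j t x := by
    rw [Finset.mul_sum]
    apply Finset.sum_congr rfl; intro c _
    rw [chT_symm h hsymm a c b t]; ring
  rw [hsum]
  ring

end
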